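/- arXiv:1611.00270 — 9 statements merged into one kernel-verified Lean document; each statement's English description precedes it below -/
import Mathlib

section
/- For θ ∈ (0,1), θ^(θ/(1-θ)) < 1 - θ^(1/(1-θ)). -/
/-! With `a = θ / (1 - θ)` we have `θ ^ (1 / (1 - θ)) = θ ^ a * θ`, so the claim is
`θ ^ a * (1 + θ) < 1`. Taking logarithms and multiplying by `1 - θ`, this is
`θ log θ + (1 - θ) log (1 + θ) < 0`, which follows by adding `log θ < θ - 1` (weighted by `θ`)
and `log (1 + θ) < θ` (weighted by `1 - θ`). -/

open Real

lemma mul_log_add_one_sub_mul_log_one_add_neg {θ : ℝ} (h0 : 0 < θ) (h1 : θ < 1) :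
    θ * log θ + (1 - θ) * log (1 + θ) < 0 := by
  have hlog : log θ < θ - 1 := log_lt_sub_one_of_pos h0 h1.ne
  have hlog_one_add : log (1 + θ) < θ := by
    linarith [log_lt_sub_one_of_pos (by linarith : 0 < 1 + θ) (by linarith : 1 + θ ≠ 1)]
  linarith [mul_lt_mul_of_pos_left hlog h0,
    mul_lt_mul_of_pos_left hlog_one_add (sub_pos.mpr h1)]

lemma rpow_div_one_sub_mul_one_add_lt_one {θ : ℝ} (h0 : 0 < θ) (h1 : θ < 1) :
    θ ^ (θ / (1 - θ)) * (1 + θ) < 1 := by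
  have hs : 0 < 1 - θ := sub_pos.mpr h1
  have hpos : 0 < θ ^ (θ / (1 - θ)) * (1 + θ) := by positivity
  rw [← log_neg_iff hpos, log_mul (by positivity) (by linarith), log_rpow h0,
    div_mul_eq_mul_div, div_add' _ _ _ hs.ne', div_neg_iff]
  exact Or.inr ⟨by linarith [mul_log_add_one_sub_mul_log_one_add_neg h0 h1], hs⟩

theorem rpow_ineq (θ : ℝ) (hθ : θ ∈ Set.Ioo (0:ℝ) 1) :
    θ ^ (θ / (1 - θ)) < 1 - θ ^ (1 / (1 - θ)) := by
  obtain ⟨h0, h1⟩ := hθ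
  have hsplit : θ ^ (1 / (1 - θ)) = θ ^ (θ / (1 - θ)) * θ := by
    rw [← rpow_add_one h0.ne', div_add_one (sub_pos.mpr h1).ne', add_sub_cancel]
  rw [hsplit]
  linarith [rpow_div_one_sub_mul_one_add_lt_one h0 h1]
end

section
/- Let S be a finite set, ε ∈ [0,1), and let p_{S̃|S} be a stochastic matrix (channel) from S to a finite set S̃. There exists a stochastic matrix p_{S̃|S̃'} from S ∪ {*} to S̃ such that p_{S̃|S}(s̃|s) = (1-ε)·p_{S̃|S̃'}(s̃|s) + ε·p_{S̃|S̃'}(s̃|*) for all s ∈ S, s̃ ∈ S̃, if and only if Σ_{s̃ ∈ S̃} min_{s ∈ S} p_{S̃|S}(s̃|s) ≥ ε. -/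
/-- A channel `W` from `S` to `T` is stochastically degraded w.r.t. the generalized
erasure channel with erasure probability `ε` iff the sum over `t` of the minimum of
`W s t` over `s` is at least `ε`. -/
theorem degraded_of_erasure_iff {S T : Type*} [Fintype S] [Fintype T] [Nonempty S]
    (ε : ℝ) (hε : ε ∈ Set.Ico (0:ℝ) 1)
    (W : S → T → ℝ) (hWnn : ∀ s t, 0 ≤ W s t) (hWsum : ∀ s, ∑ t, W s t = 1) :
    (∃ K : Option S → T → ℝ,
        (∀ o t, 0 ≤ K o t) ∧ (∀ o, ∑ t, K o t = 1) ∧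
        (∀ s t, W s t = (1 - ε) * K (some s) t + ε * K none t)) ↔
      ε ≤ ∑ t, Finset.univ.inf' Finset.univ_nonempty (fun s => W s t) := by
  obtain ⟨hε0, hε1⟩ := hε
  set μ : T → ℝ := fun t => Finset.univ.inf' Finset.univ_nonempty (fun s => W s t) with hμ
  have hμle : ∀ s t, μ t ≤ W s t := fun s t =>
    Finset.inf'_le _ (Finset.mem_univ s)
  have hμnn : ∀ t, 0 ≤ μ t := fun t => Finset.le_inf' _ _ fun s _ => hWnn s t
  constructor
  · rintro ⟨K, hKnn, hKsum, hKeq⟩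
    have key : ∀ t, ε * K none t ≤ μ t := by
      intro t
      apply Finset.le_inf'
      intro s _
      have := hKeq s t
      nlinarith [hKnn (some s) t, hKnn none t]
    calc ε = ∑ t, ε * K none t := by rw [← Finset.mul_sum, hKsum none, mul_one]
      _ ≤ ∑ t, μ t := Finset.sum_le_sum fun t _ => key t
  · intro hm
    rcases eq_or_lt_of_le hε0 with h0 | h0
    · refine ⟨fun o t => match o with
        | some s => W s t
        | none => W (Classical.arbitrary S) t, ?_, ?_, ?_⟩
      · rintro (_ | s) t <;> apply hWnn
      · rintro (_ | s) <;> apply hWsum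
      · intro s t
        simp [← h0]
    · set m : ℝ := ∑ t, μ t with hmdef
      have hmpos : 0 < m := lt_of_lt_of_le h0 hm
      refine ⟨fun o t => match o with
        | some s => (W s t - ε * (μ t / m)) / (1 - ε)
        | none => μ t / m, ?_, ?_, ?_⟩
      · rintro (_ | s) t
        · exact div_nonneg (hμnn t) hmpos.le
        · apply div_nonneg _ (by linarith)
          have h1 : ε * (μ t / m) ≤ μ t := by
            rw [mul_div_assoc']
            rw [div_le_iff₀ hmpos]
            nlinarith [hμnn t]
          linarith [hμle s t]
      · rintro (_ | s)
        · rw [← Finset.sum_div, div_eq_one_iff_eq hmpos.ne']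
        · simp only
          rw [← Finset.sum_div, div_eq_one_iff_eq (by linarith : (1:ℝ) - ε ≠ 0)]
          have hsub : ∑ t, (W s t - ε * (μ t / m)) =
              (∑ t, W s t) - ε * ((∑ t, μ t) / m) := by
            rw [Finset.sum_sub_distrib]
            congr 1
            rw [Finset.sum_div, Finset.mul_sum]
          rw [hsub, hWsum, ← hmdef, div_self hmpos.ne', mul_one]
      · intro s t
        simp only
        rw [mul_div_cancel₀ _ (by linarith : (1:ℝ) - ε ≠ 0)]
        ring
end

section
/- Let Q be the n×n generalized symmetric channel matrix with crossover probability q ∈ [0, 1/n) (diagonal 1-(n-1)q, off-diagonal q), and let P be any n×m stochastic matrix (rows sum to 1, entries nonnegative). Then all entries of Q⁻¹P are nonnegative if and only if for every column x with Σ_s P(s,x) > 0 and every row s, P(s,x)/Σ_{s'} P(s',x) ≥ q. Moreover each row of Q⁻¹P sums to 1. -/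
/-!
With `J` the all-ones matrix (`of 1`), the channel matrix is `Q = (1 - n q) • 1 + q • J`, and
`J * J = n • J` gives `Q⁻¹ = (1 - n q)⁻¹ • (1 - q • J)`. Hence
`(Q⁻¹ * P) s x = (1 - n q)⁻¹ * (P s x - q * ∑ t, P t x)`; since `1 - n q > 0` its sign is that of
`P s x - q * ∑ t, P t x`, and its row sums are `(1 - n q)⁻¹ * (1 - n q) = 1`.
-/

open Matrix

section AllOnes

variable {ι ι' κ R : Type*} [Fintype ι]

theorem Matrix.of_one_mul_apply [NonAssocSemiring R] (A : Matrix ι κ R) (i : ι') (j : κ) :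
    ((of 1 : Matrix ι' ι R) * A) i j = ∑ k, A k j := by
  simp [mul_apply]

theorem Matrix.of_one_mul_of_one [NonAssocSemiring R] :
    (of 1 : Matrix ι ι R) * of 1 = (Fintype.card ι : R) • of 1 := by
  ext i j
  simp [of_one_mul_apply]

variable [DecidableEq ι]

theorem Matrix.of_ite_eq_smul_one_add_smul_of_one [Ring R] (q : R) :
    of (fun s t : ι => if s = t then 1 - (Fintype.card ι - 1 : R) * q else q) =
      (1 - Fintype.card ι * q) • (1 : Matrix ι ι R) + q • of 1 := by
  ext s t
  by_cases h : s = t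
  · simp [h]
    noncomm_ring
  · simp [h]

theorem Matrix.inv_smul_one_add_smul_of_one [Field R] {a b : R} (ha : a ≠ 0)
    (hab : a + Fintype.card ι * b = 1) :
    (a • 1 + b • of 1 : Matrix ι ι R)⁻¹ = a⁻¹ • (1 - b • of 1) := by
  refine inv_eq_right_inv ?_
  have hb : b * (1 - a - Fintype.card ι * b) = 0 := by rw [← hab]; ring
  calc (a • 1 + b • of 1 : Matrix ι ι R) * (a⁻¹ • (1 - b • of 1))
      = a⁻¹ • (a • 1 + (b * (1 - a - Fintype.card ι * b)) • of 1) := by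
        simp only [add_mul, mul_sub, smul_mul_smul_comm, Matrix.mul_smul,
          one_mul, mul_one, of_one_mul_of_one]
        module
    _ = 1 := by rw [hb, zero_smul, add_zero, smul_smul, inv_mul_cancel₀ ha, one_smul]

theorem Matrix.inv_smul_one_sub_smul_of_one_mul [Field R] (a b : R) (P : Matrix ι κ R) :
    (a⁻¹ • (1 - b • of 1) : Matrix ι ι R) * P = of fun s x => a⁻¹ * (P s x - b * ∑ t, P t x) := by
  ext s x
  rw [Matrix.smul_mul, Matrix.sub_mul, Matrix.smul_mul, Matrix.one_mul]
  simp only [smul_apply, sub_apply, of_apply, of_one_mul_apply, smul_eq_mul]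

end AllOnes

theorem Matrix.forall_mul_sum_le_iff_forall_le_div_sum {ι κ K : Type*} [Fintype ι] [Field K]
    [LinearOrder K] [IsStrictOrderedRing K] {P : Matrix ι κ K} (hP : ∀ s x, 0 ≤ P s x) (q : K) :
    (∀ s x, q * ∑ t, P t x ≤ P s x) ↔ ∀ x, 0 < ∑ t, P t x → ∀ s, q ≤ P s x / ∑ t, P t x := by
  refine ⟨fun h x hx s => (le_div_iff₀ hx).2 (h s x), fun h s x => ?_⟩
  rcases (Finset.sum_nonneg fun t _ => hP t x).eq_or_lt with hzero | hpos
  · rw [← hzero, mul_zero]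
    exact hP s x
  · exact (le_div_iff₀ hpos).1 (h x hpos s)

open Finset in
theorem gs_inv_mul_stochastic_general (n m : ℕ) (q : ℝ)
    (hq : q ∈ Set.Ico (0:ℝ) (1 / n))
    (P : Matrix (Fin n) (Fin m) ℝ)
    (hPnn : ∀ s x, 0 ≤ P s x) (hPsum : ∀ s, ∑ x, P s x = 1) :
    ((∀ s x, 0 ≤ ((Matrix.of (fun s t : Fin n =>
          if s = t then 1 - (n - 1 : ℝ) * q else q))⁻¹ * P) s x) ↔
      (∀ x : Fin m, 0 < ∑ s, P s x → ∀ s : Fin n, q ≤ P s x / ∑ s', P s' x)) ∧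
    (∀ s : Fin n, ∑ x, ((Matrix.of (fun s t : Fin n =>
          if s = t then 1 - (n - 1 : ℝ) * q else q))⁻¹ * P) s x = 1) := by
  have hc : 0 < 1 - n * q := by
    rcases n.eq_zero_or_pos with rfl | hn
    · simp
    · linarith [(lt_div_iff₀ (Nat.cast_pos.2 hn : (0:ℝ) < n)).1 hq.2]
  have hQ := of_ite_eq_smul_one_add_smul_of_one (ι := Fin n) q
  rw [Fintype.card_fin] at hQ
  rw [hQ, inv_smul_one_add_smul_of_one hc.ne' (by simp), inv_smul_one_sub_smul_of_one_mul]
  simp only [of_apply, mul_nonneg_iff_of_pos_left (inv_pos.2 hc), sub_nonneg]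
  refine ⟨forall_mul_sum_le_iff_forall_le_div_sum hPnn q, fun s => ?_⟩
  rw [← mul_sum, sum_sub_distrib, hPsum, ← mul_sum, sum_comm]
  simp only [hPsum, sum_const, card_univ, Fintype.card_fin, nsmul_eq_mul, mul_one]
  field_simp

/-- For the generalized symmetric channel matrix `Q` and a stochastic matrix `P`,
all entries of `Q⁻¹ * P` are nonnegative iff every column with positive sum has all
its normalized entries at least `q`; moreover each row of `Q⁻¹ * P` sums to 1. -/
theorem gs_inv_mul_stochastic (n m : ℕ) (hn : 1 ≤ n) (q : ℝ)
    (hq : q ∈ Set.Ico (0:ℝ) (1 / n))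
    (P : Matrix (Fin n) (Fin m) ℝ)
    (hPnn : ∀ s x, 0 ≤ P s x) (hPsum : ∀ s, ∑ x, P s x = 1) :
    ((∀ s x, 0 ≤ ((Matrix.of (fun s t : Fin n =>
          if s = t then 1 - (n - 1 : ℝ) * q else q))⁻¹ * P) s x) ↔
      (∀ x : Fin m, 0 < ∑ s, P s x → ∀ s : Fin n, q ≤ P s x / ∑ s', P s' x)) ∧
    (∀ s : Fin n, ∑ x, ((Matrix.of (fun s t : Fin n =>
          if s = t then 1 - (n - 1 : ℝ) * q else q))⁻¹ * P) s x = 1) :=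
  gs_inv_mul_stochastic_general n m q hq P hPnn hPsum
end

section
/- Let Q be the n×n generalized symmetric channel matrix with crossover probability q ∈ [0,1/n) and R an n×n stochastic matrix. If max over s ≠ ŝ with Σ_{s'} R(s',ŝ) > 0 of R(s,ŝ)/Σ_{s'} R(s',ŝ) ≤ q, then the matrix Q⁻¹·R (with rows and columns indexed appropriately so that the (s,ŝ) entry involves R(s,ŝ)) is a nonsingular M-matrix: its off-diagonal entries are nonpositive and its row sums equal 1. -/
/-! Writing `J` for the all-ones matrix, the generalized symmetric channel is
`Q = (1 - n q) • 1 + q • J`, and `J * J = n • J` gives `Q⁻¹ = (1 - n q)⁻¹ • (1 - q • J)`.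
Hence `(Q⁻¹ * R) s t = (R s t - q ∑_{s'} R s' t) / (1 - n q)`: the hypothesis on the normalized
columns of `R` makes the numerator nonpositive off the diagonal, and since the entries of the
stochastic matrix `R` add up to `n`, each row of `Q⁻¹ * R` sums to `(1 - n q) / (1 - n q)`. -/

namespace Matrix

variable {ι K : Type*} [Fintype ι] [Field K]

theorem allOnes_mul_allOnes :
    (of fun _ _ : ι => (1 : K)) * (of fun _ _ : ι => (1 : K)) =
      (Fintype.card ι : K) • of fun _ _ : ι => (1 : K) := by
  ext s t
  simp [mul_apply]

variable [DecidableEq ι]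

/-- The generalized symmetric channel with crossover probability `q`. -/
def gsChannel (q : K) : Matrix ι ι K :=
  of fun s t => if s = t then 1 - (Fintype.card ι - 1) * q else q

theorem gsChannel_eq (q : K) :
    gsChannel q =
      (1 - Fintype.card ι * q) • (1 : Matrix ι ι K) + q • of fun _ _ : ι => (1 : K) := by
  ext s t
  by_cases h : s = t <;> simp [gsChannel, h]
  ring

theorem gsChannel_mul_one_sub_smul_allOnes (q : K) :
    gsChannel q * (1 - q • of fun _ _ : ι => (1 : K)) = (1 - Fintype.card ι * q) • 1 := by
  simp only [gsChannel_eq, add_mul, mul_sub, smul_mul_assoc, mul_smul_comm, one_mul, mul_one,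
    allOnes_mul_allOnes]
  module

theorem inv_gsChannel {q : K} (hq : (Fintype.card ι : K) * q ≠ 1) :
    (gsChannel q)⁻¹ = (1 - Fintype.card ι * q)⁻¹ • (1 - q • of fun _ _ : ι => (1 : K)) := by
  apply inv_eq_right_inv
  rw [mul_smul_comm, gsChannel_mul_one_sub_smul_allOnes, smul_smul,
    inv_mul_cancel₀ (sub_ne_zero.mpr hq.symm), one_smul]

theorem inv_gsChannel_mul_apply {q : K} (hq : (Fintype.card ι : K) * q ≠ 1)
    (R : Matrix ι ι K) (s t : ι) :
    ((gsChannel q : Matrix ι ι K)⁻¹ * R) s t =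
      (R s t - q * ∑ s', R s' t) / (1 - Fintype.card ι * q) := by
  rw [inv_gsChannel hq, smul_mul, sub_mul, one_mul, smul_mul]
  simp [mul_apply, Finset.mul_sum, div_eq_inv_mul]

theorem sum_inv_gsChannel_mul_apply {q : K} (hq : (Fintype.card ι : K) * q ≠ 1)
    {R : Matrix ι ι K} (hR : ∀ s, ∑ t, R s t = 1) (s : ι) :
    ∑ t, ((gsChannel q : Matrix ι ι K)⁻¹ * R) s t = 1 := by
  have hmass : ∑ t, ∑ s', R s' t = Fintype.card ι := by
    rw [Finset.sum_comm]; simp [hR]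
  simp_rw [inv_gsChannel_mul_apply hq, ← Finset.sum_div, Finset.sum_sub_distrib, ← Finset.mul_sum,
    hR, hmass, mul_comm q]
  exact div_self (sub_ne_zero.mpr hq.symm)

theorem inv_gsChannel_mul_apply_nonpos [LinearOrder K] [IsStrictOrderedRing K] {q : K}
    (hq : (Fintype.card ι : K) * q < 1) {R : Matrix ι ι K} (hR : ∀ s t, 0 ≤ R s t) {s t : ι}
    (hst : 0 < ∑ s', R s' t → R s t / ∑ s', R s' t ≤ q) :
    ((gsChannel q : Matrix ι ι K)⁻¹ * R) s t ≤ 0 := by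
  have hle : R s t ≤ q * ∑ s', R s' t := by
    rcases (Finset.sum_nonneg fun s' _ => hR s' t).eq_or_lt with hcol | hcol
    · rw [← hcol, mul_zero, hcol]
      exact Finset.single_le_sum (fun s' _ => hR s' t) (Finset.mem_univ s)
    · exact (div_le_iff₀ hcol).mp (hst hcol)
  rw [inv_gsChannel_mul_apply hq.ne]
  exact div_nonpos_of_nonpos_of_nonneg (sub_nonpos.mpr hle) (sub_nonneg.mpr hq.le)

end Matrix

theorem gs_inv_mul_M_matrix_general (n : ℕ) (q : ℝ)
    (hq : q ∈ Set.Ico (0:ℝ) (1 / n))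
    (R : Matrix (Fin n) (Fin n) ℝ)
    (hRnn : ∀ s t, 0 ≤ R s t) (hRsum : ∀ s, ∑ t, R s t = 1)
    (hmax : ∀ s t : Fin n, s ≠ t → 0 < ∑ s', R s' t →
      R s t / ∑ s', R s' t ≤ q) :
    (∀ s t : Fin n, s ≠ t →
        ((Matrix.of (fun s t : Fin n =>
            if s = t then 1 - (n - 1 : ℝ) * q else q))⁻¹ * R) s t ≤ 0) ∧
    (∀ s : Fin n, ∑ t, ((Matrix.of (fun s t : Fin n =>
            if s = t then 1 - (n - 1 : ℝ) * q else q))⁻¹ * R) s t = 1) := by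
  have hQ : Matrix.of (fun s t : Fin n => if s = t then 1 - (n - 1 : ℝ) * q else q) =
      Matrix.gsChannel q := by
    simp [Matrix.gsChannel]
  have hnq : (Fintype.card (Fin n) : ℝ) * q < 1 := by
    rcases n.eq_zero_or_pos with rfl | hn
    · simp
    · rw [Fintype.card_fin, ← lt_div_iff₀' (by positivity)]
      exact hq.2
  rw [hQ]
  exact ⟨fun s t hst => Matrix.inv_gsChannel_mul_apply_nonpos hnq hRnn (hmax s t hst),
    Matrix.sum_inv_gsChannel_mul_apply hnq.ne hRsum⟩

/-- If every normalized off-diagonal entry of the stochastic matrix `R`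
(with positive column sum) is at most `q`, then `Q⁻¹ * R` has nonpositive
off-diagonal entries and row sums equal to 1 (nonsingular M-matrix structure). -/
theorem gs_inv_mul_M_matrix (n : ℕ) (hn : 1 ≤ n) (q : ℝ)
    (hq : q ∈ Set.Ico (0:ℝ) (1 / n))
    (R : Matrix (Fin n) (Fin n) ℝ)
    (hRnn : ∀ s t, 0 ≤ R s t) (hRsum : ∀ s, ∑ t, R s t = 1)
    (hmax : ∀ s t : Fin n, s ≠ t → 0 < ∑ s', R s' t →
      R s t / ∑ s', R s' t ≤ q) :
    (∀ s t : Fin n, s ≠ t →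
        ((Matrix.of (fun s t : Fin n =>
            if s = t then 1 - (n - 1 : ℝ) * q else q))⁻¹ * R) s t ≤ 0) ∧
    (∀ s : Fin n, ∑ t, ((Matrix.of (fun s t : Fin n =>
            if s = t then 1 - (n - 1 : ℝ) * q else q))⁻¹ * R) s t = 1) :=
  gs_inv_mul_M_matrix_general n q hq R hRnn hRsum hmax
end

section
/- Let S, S̃ be finite random variables with joint distribution p_{S,S̃}, let ρ = min_s p_S(s) > 0, and suppose Σ_{s̃} min_s p_{S̃|S}(s̃|s) < 1 - e⁻¹. Then I(S;S̃) > ρ²/(2e²). -/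
/-!
Pinsker's inequality follows from the pointwise bound `3 (x - 1)² / (2 (x + 2)) ≤ x log x - x + 1`
combined with Cauchy–Schwarz against the weights `p + 2q` (which sum to `3`), gives
`D(W_s ‖ q) ≥ ‖W_s - q‖₁² / 2` for every input `s`, where `q` is the output distribution;
averaging over `s` with Jensen yields `I(S; S̃) ≥ (∑ₛ p(s) ‖W_s - q‖₁)² / 2`.
For each output `t`, the input `s` minimizing `W s t` alone contributes
`p(s) (q t - W s t) ≥ ρ (q t - minₛ W s t)`, so the average `L¹` distance is at least
`ρ (1 - ∑ₜ minₛ W s t) > ρ / e`.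
-/

open Real Set InformationTheory

lemma hasDerivAt_log_sub_div {x : ℝ} (hx : 0 < x) :
    HasDerivAt (fun y => log y - 3 * ((y - 1) * (y + 5)) / (2 * (y + 2) ^ 2))
      (x⁻¹ - 27 / (x + 2) ^ 3) x := by
  have hnum : HasDerivAt (fun y : ℝ => 3 * ((y - 1) * (y + 5))) (3 * (2 * x + 4)) x :=
    ((((hasDerivAt_id' x).sub_const 1).mul ((hasDerivAt_id' x).add_const 5)).const_mul 3)
      |>.congr_deriv (by ring)
  have hden : HasDerivAt (fun y : ℝ => 2 * (y + 2) ^ 2) (4 * (x + 2)) x :=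
    ((((hasDerivAt_id' x).add_const 2).pow 2).const_mul 2).congr_deriv (by simp; ring)
  refine ((hasDerivAt_log hx.ne').sub (hnum.div hden (by positivity))).congr_deriv ?_
  field_simp
  ring

lemma hasDerivAt_klFun_sub_div {x : ℝ} (hx : 0 < x) :
    HasDerivAt (fun y => klFun y - 3 * (y - 1) ^ 2 / (2 * (y + 2)))
      (log x - 3 * ((x - 1) * (x + 5)) / (2 * (x + 2) ^ 2)) x := by
  have hnum : HasDerivAt (fun y : ℝ => 3 * (y - 1) ^ 2) (6 * (x - 1)) x :=
    ((((hasDerivAt_id' x).sub_const 1).pow 2).const_mul 3).congr_deriv (by simp; ring)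
  have hden : HasDerivAt (fun y : ℝ => 2 * (y + 2)) 2 x :=
    (((hasDerivAt_id' x).add_const 2).const_mul 2).congr_deriv (by ring)
  refine ((hasDerivAt_klFun hx.ne').sub (hnum.div hden (by positivity))).congr_deriv ?_
  field_simp
  ring

lemma monotoneOn_log_sub_div :
    MonotoneOn (fun y => log y - 3 * ((y - 1) * (y + 5)) / (2 * (y + 2) ^ 2)) (Ioi 0) := by
  refine monotoneOn_of_hasDerivWithinAt_nonneg (convex_Ioi 0)
    (fun y hy => (hasDerivAt_log_sub_div hy).continuousAt.continuousWithinAt)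
    (fun y hy => (hasDerivAt_log_sub_div (interior_subset hy)).hasDerivWithinAt) ?_
  rw [interior_Ioi]
  intro y (hy : 0 < y)
  refine sub_nonneg.2 ?_
  rw [div_le_iff₀ (by positivity), inv_mul_eq_div, le_div_iff₀ hy]
  nlinarith [sq_nonneg (y - 1), mul_nonneg hy.le (sq_nonneg (y - 1))]

lemma nonneg_of_hasDerivAt_of_sign_sub_one {f f' : ℝ → ℝ}
    (hf : ∀ x, 0 < x → HasDerivAt f (f' x) x) (hf_one : f 1 = 0)
    (hf'_nonpos : ∀ x, 0 < x → x ≤ 1 → f' x ≤ 0) (hf'_nonneg : ∀ x, 1 ≤ x → 0 ≤ f' x)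
    {x : ℝ} (hx : 0 < x) : 0 ≤ f x := by
  rcases le_total x 1 with hx1 | hx1
  · have hanti : AntitoneOn f (Icc x 1) :=
      antitoneOn_of_hasDerivWithinAt_nonpos (convex_Icc x 1)
        (fun y hy => (hf y (hx.trans_le hy.1)).continuousAt.continuousWithinAt)
        (fun y hy => (hf y (hx.trans_le (interior_subset hy).1)).hasDerivWithinAt)
        (fun y hy => by
          rw [interior_Icc] at hy
          exact hf'_nonpos y (hx.trans hy.1) hy.2.le)
    simpa [hf_one] using hanti (left_mem_Icc.2 hx1) (right_mem_Icc.2 hx1) hx1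
  · have hmono : MonotoneOn f (Icc 1 x) :=
      monotoneOn_of_hasDerivWithinAt_nonneg (convex_Icc 1 x)
        (fun y hy => (hf y (one_pos.trans_le hy.1)).continuousAt.continuousWithinAt)
        (fun y hy => (hf y (one_pos.trans_le (interior_subset hy).1)).hasDerivWithinAt)
        (fun y hy => by
          rw [interior_Icc] at hy
          exact hf'_nonneg y hy.1.le)
    simpa [hf_one] using hmono (left_mem_Icc.2 hx1) (right_mem_Icc.2 hx1) hx1

lemma three_mul_sq_sub_one_div_le_klFun {x : ℝ} (hx : 0 ≤ x) :
    3 * (x - 1) ^ 2 / (2 * (x + 2)) ≤ klFun x := by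
  rcases hx.eq_or_lt with rfl | hx
  · norm_num [klFun_zero]
  have hφ_one : log 1 - 3 * ((1 - 1) * (1 + 5)) / (2 * ((1 : ℝ) + 2) ^ 2) = 0 := by norm_num
  suffices 0 ≤ klFun x - 3 * (x - 1) ^ 2 / (2 * (x + 2)) by linarith
  refine nonneg_of_hasDerivAt_of_sign_sub_one (fun y hy => hasDerivAt_klFun_sub_div hy)
    (by norm_num [klFun_one]) (fun y hy hy1 => ?_) (fun y hy1 => ?_) hx
  · exact hφ_one ▸ monotoneOn_log_sub_div hy (mem_Ioi.2 one_pos) hy1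
  · exact hφ_one ▸ monotoneOn_log_sub_div (mem_Ioi.2 one_pos) (mem_Ioi.2 (one_pos.trans_le hy1)) hy1

lemma three_mul_sq_sub_div_le_mul_log_div {p q : ℝ} (hp : 0 ≤ p) (hq : 0 ≤ q)
    (hpq : q = 0 → p = 0) :
    3 * (p - q) ^ 2 / (2 * (p + 2 * q)) ≤ p * log (p / q) - p + q := by
  rcases hq.eq_or_lt with rfl | hq
  · simp [hpq rfl]
  calc 3 * (p - q) ^ 2 / (2 * (p + 2 * q))
      = q * (3 * (p / q - 1) ^ 2 / (2 * (p / q + 2))) := by field_simp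
    _ ≤ q * klFun (p / q) := by gcongr; exact three_mul_sq_sub_one_div_le_klFun (by positivity)
    _ = p * log (p / q) - p + q := by
      rw [klFun_apply, mul_sub, mul_add, ← mul_assoc, mul_div_cancel₀ _ hq.ne']
      ring

theorem sq_sum_abs_sub_div_two_le_sum_mul_log_div {ι : Type*} [Fintype ι] {P Q : ι → ℝ}
    (hP : ∀ i, 0 ≤ P i) (hQ : ∀ i, 0 ≤ Q i) (hP_sum : ∑ i, P i = 1) (hQ_sum : ∑ i, Q i = 1)
    (hPQ : ∀ i, Q i = 0 → P i = 0) :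
    (∑ i, |P i - Q i|) ^ 2 / 2 ≤ ∑ i, P i * log (P i / Q i) := by
  have hcs : (∑ i, |P i - Q i|) ^ 2 ≤
      (∑ i, (P i - Q i) ^ 2 / (P i + 2 * Q i)) * ∑ i, (P i + 2 * Q i) := by
    refine Finset.sum_sq_le_sum_mul_sum_of_sq_le_mul _ (fun i _ => ?_) (fun i _ => ?_)
      (fun i _ => ?_)
    · have := hP i; have := hQ i; positivity
    · have := hP i; have := hQ i; positivity
    · rw [sq_abs, div_mul_cancel_of_imp]
      intro h
      have hQi : Q i = 0 := by linarith [hP i, hQ i]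
      simp [hQi, hPQ i hQi]
  have hsum_three : ∑ i, (P i + 2 * Q i) = 3 := by
    rw [Finset.sum_add_distrib, ← Finset.mul_sum, hP_sum, hQ_sum]
    norm_num
  calc (∑ i, |P i - Q i|) ^ 2 / 2
      ≤ ∑ i, 3 * (P i - Q i) ^ 2 / (2 * (P i + 2 * Q i)) := by
        rw [hsum_three] at hcs
        simp_rw [mul_div_mul_comm (3 : ℝ), ← Finset.mul_sum]
        linarith
    _ ≤ ∑ i, (P i * log (P i / Q i) - P i + Q i) :=
        Finset.sum_le_sum fun i _ => three_mul_sq_sub_div_le_mul_log_div (hP i) (hQ i) (hPQ i)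
    _ = ∑ i, P i * log (P i / Q i) := by
        rw [Finset.sum_add_distrib, Finset.sum_sub_distrib, hP_sum, hQ_sum]
        ring

lemma sum_sum_mul_eq_one {S T : Type*} [Fintype S] [Fintype T] {pS : S → ℝ} {W : S → T → ℝ}
    (hpS_sum : ∑ s, pS s = 1) (hW_sum : ∀ s, ∑ t, W s t = 1) :
    ∑ t, ∑ s, pS s * W s t = 1 := by
  rw [Finset.sum_comm]
  simp_rw [← Finset.mul_sum, hW_sum, mul_one, hpS_sum]

theorem sq_sum_mul_abs_sub_div_two_le_mutualInfo {S T : Type*} [Fintype S] [Fintype T]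
    {pS : S → ℝ} {W : S → T → ℝ} (hpS : ∀ s, 0 ≤ pS s) (hpS_sum : ∑ s, pS s = 1)
    (hW : ∀ s t, 0 ≤ W s t) (hW_sum : ∀ s, ∑ t, W s t = 1) :
    (∑ s, ∑ t, pS s * |W s t - ∑ s', pS s' * W s' t|) ^ 2 / 2 ≤
      ∑ s, ∑ t, pS s * W s t * log (W s t / ∑ s', pS s' * W s' t) := by
  set q : T → ℝ := fun t => ∑ s', pS s' * W s' t
  set d : S → ℝ := fun s => ∑ t, |W s t - q t|
  have hq : ∀ t, 0 ≤ q t := fun t => Finset.sum_nonneg fun s _ => mul_nonneg (hpS s) (hW s t)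
  have hq_sum : ∑ t, q t = 1 := sum_sum_mul_eq_one hpS_sum hW_sum
  have hpinsker : ∀ s, pS s * (d s ^ 2 / 2) ≤ pS s * ∑ t, W s t * log (W s t / q t) := by
    intro s
    rcases (hpS s).eq_or_lt with hs | hs
    · simp [← hs]
    refine mul_le_mul_of_nonneg_left (sq_sum_abs_sub_div_two_le_sum_mul_log_div (hW s) hq
      (hW_sum s) hq_sum fun t ht => ?_) hs.le
    have : pS s * W s t ≤ q t :=
      Finset.single_le_sum (f := fun s' => pS s' * W s' t)
        (fun s' _ => mul_nonneg (hpS s') (hW s' t)) (Finset.mem_univ s)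
    nlinarith [hW s t]
  have hjensen : (∑ s, pS s * d s) ^ 2 ≤ ∑ s, pS s * d s ^ 2 := by
    simpa only [smul_eq_mul] using
      (even_two.convexOn_pow (𝕜 := ℝ)).map_sum_le (fun s _ => hpS s) hpS_sum
        (fun s _ => Set.mem_univ (d s))
  calc (∑ s, ∑ t, pS s * |W s t - q t|) ^ 2 / 2
      = (∑ s, pS s * d s) ^ 2 / 2 := by simp only [d, Finset.mul_sum]
    _ ≤ ∑ s, pS s * (d s ^ 2 / 2) := by
        simp_rw [← mul_div_assoc, ← Finset.sum_div]
        gcongr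
    _ ≤ ∑ s, pS s * ∑ t, W s t * log (W s t / q t) := Finset.sum_le_sum fun s _ => hpinsker s
    _ = ∑ s, ∑ t, pS s * W s t * log (W s t / q t) := by simp only [Finset.mul_sum, mul_assoc]

lemma inf'_mul_one_sub_sum_inf'_le_sum_mul_abs_sub {S T : Type*} [Fintype S] [Fintype T]
    [Nonempty S] {pS : S → ℝ} (hpS : ∀ s, 0 ≤ pS s) (W : S → T → ℝ) {q : T → ℝ}
    (hq_sum : ∑ t, q t = 1) :
    Finset.univ.inf' Finset.univ_nonempty pS *
        (1 - ∑ t, Finset.univ.inf' Finset.univ_nonempty (fun s => W s t)) ≤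
      ∑ s, ∑ t, pS s * |W s t - q t| := by
  have hρ : 0 ≤ Finset.univ.inf' Finset.univ_nonempty pS :=
    (Finset.le_inf'_iff _ _).2 fun s _ => hpS s
  rw [← hq_sum, ← Finset.sum_sub_distrib, Finset.mul_sum, Finset.sum_comm]
  refine Finset.sum_le_sum fun t _ => ?_
  obtain ⟨σ, -, hσ⟩ := Finset.exists_mem_eq_inf' Finset.univ_nonempty fun s => W s t
  rw [hσ]
  calc Finset.univ.inf' Finset.univ_nonempty pS * (q t - W σ t)
      ≤ Finset.univ.inf' Finset.univ_nonempty pS * |W σ t - q t| := by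
        rw [abs_sub_comm]
        exact mul_le_mul_of_nonneg_left (le_abs_self _) hρ
    _ ≤ pS σ * |W σ t - q t| :=
        mul_le_mul_of_nonneg_right (Finset.inf'_le _ (Finset.mem_univ σ)) (abs_nonneg _)
    _ ≤ ∑ s, pS s * |W s t - q t| :=
        Finset.single_le_sum (f := fun s => pS s * |W s t - q t|)
          (fun s _ => mul_nonneg (hpS s) (abs_nonneg _)) (Finset.mem_univ σ)

open Real in
/-- If the sum over `t` of the columnwise minimum of the channel `W` is below
`1 - e⁻¹`, then the mutual information `I(S; S̃)` (in nats) exceeds `ρ²/(2e²)`,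
where `ρ` is the minimum state probability. -/
theorem mutualInfo_gt_of_min_sum_lt {S T : Type*} [Fintype S] [Fintype T]
    [Nonempty S]
    (pS : S → ℝ) (hpSnn : ∀ s, 0 < pS s) (hpSsum : ∑ s, pS s = 1)
    (W : S → T → ℝ) (hWnn : ∀ s t, 0 ≤ W s t) (hWsum : ∀ s, ∑ t, W s t = 1)
    (hmin : ∑ t, Finset.univ.inf' Finset.univ_nonempty (fun s => W s t)
        < 1 - (Real.exp 1)⁻¹) :
    ((Finset.univ.inf' Finset.univ_nonempty pS) ^ 2) / (2 * Real.exp 1 ^ 2) <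
      ∑ s, ∑ t, pS s * W s t *
        Real.log (W s t / (∑ s', pS s' * W s' t)) := by
  set ρ := Finset.univ.inf' Finset.univ_nonempty pS
  have hρ : 0 < ρ := (Finset.lt_inf'_iff _).2 fun s _ => hpSnn s
  have hdist : ρ * (exp 1)⁻¹ < ∑ s, ∑ t, pS s * |W s t - ∑ s', pS s' * W s' t| :=
    calc ρ * (exp 1)⁻¹ < ρ * (1 - ∑ t, Finset.univ.inf' Finset.univ_nonempty (W · t)) :=
          mul_lt_mul_of_pos_left (by linarith) hρ
      _ ≤ _ := inf'_mul_one_sub_sum_inf'_le_sum_mul_abs_sub (fun s => (hpSnn s).le) W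
            (sum_sum_mul_eq_one hpSsum hWsum)
  calc ρ ^ 2 / (2 * exp 1 ^ 2) = (ρ * (exp 1)⁻¹) ^ 2 / 2 := by field_simp
    _ < (∑ s, ∑ t, pS s * |W s t - ∑ s', pS s' * W s' t|) ^ 2 / 2 := by gcongr
    _ ≤ _ := sq_sum_mul_abs_sub_div_two_le_mutualInfo (fun s => (hpSnn s).le) hpSsum hWnn hWsum
end

section
/- Contrapositive form: if I(S;S̃) ≤ ρ²/(2e²) where ρ = min_s p_S(s) > 0, then Σ_{s̃ ∈ S̃} min_{s ∈ S} p_{S̃|S}(s̃|s) ≥ 1 - e⁻¹. -/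
/-!
Pinsker's inequality bounds the `ℓ¹` distance between the joint law of `(S, S̃)` and
the product of its marginals by `√(2 I(S;S̃)) ≤ ρ/e`. For each output `t` the row `s ↦ W(t|s)`
differs from the output law `q(t)` by at most `(1/ρ) ∑_s p_S(s) |W(t|s) - q(t)|`, since every
weight `p_S(s)` is at least `ρ`; summing over `t` gives `∑_t min_s W(t|s) ≥ 1 - (ρ/e)/ρ`.
Pinsker's inequality itself follows from Cauchy–Schwarz and the pointwise bound
`3 (x - 1)² ≤ 2 (x + 2) (x log x + 1 - x)` for `x ≥ 0`.
-/

open Real Finset InformationTheory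

lemma three_mul_sq_sub_one_le_klFun {x : ℝ} (hx : 0 ≤ x) :
    3 * (x - 1) ^ 2 ≤ 2 * (x + 2) * klFun x := by
  set f : ℝ → ℝ := fun x ↦ 2 * (x + 2) * klFun x - 3 * (x - 1) ^ 2
  set f' : ℝ → ℝ := fun x ↦ 4 * ((x + 1) * log x - 2 * (x - 1))
  have hf' : ∀ x, 0 < x → HasDerivAt f (f' x) x := by
    intro x hx
    have := ((((hasDerivAt_id x).add_const 2).const_mul 2).mul (hasDerivAt_klFun hx.ne')).sub
      ((((hasDerivAt_id x).sub_const 1).pow 2).const_mul 3)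
    refine this.congr_deriv ?_
    simp only [f', klFun_apply, id]
    ring
  have hf'' : ∀ x, 0 < x → HasDerivAt f' (4 * (log x + x⁻¹ - 1)) x := by
    intro x hx
    have := ((((hasDerivAt_id x).add_const 1).mul (hasDerivAt_log hx.ne')).sub
      (((hasDerivAt_id x).sub_const 1).const_mul 2)).const_mul 4
    refine this.congr_deriv ?_
    simp only [id]
    field_simp
    ring
  have hconvex : ConvexOn ℝ (Set.Ici 0) f := by
    refine convexOn_of_hasDerivWithinAt2_nonneg (f' := f')
      (f'' := fun x ↦ 4 * (log x + x⁻¹ - 1)) (convex_Ici 0)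
      (by fun_prop) (fun x hx ↦ ?_) (fun x hx ↦ ?_) (fun x hx ↦ ?_) <;>
      rw [interior_Ici] at hx
    · exact (hf' x hx).hasDerivWithinAt
    · exact (hf'' x hx).hasDerivWithinAt
    · linarith [one_sub_inv_le_log_of_pos hx]
  have hmin : IsMinOn f (Set.Ici 0) 1 := by
    refine hconvex.isMinOn_of_rightDeriv_eq_zero (by simp) ?_
    rw [(hf' 1 one_pos).hasDerivWithinAt.derivWithin (uniqueDiffWithinAt_Ioi 1)]
    simp [f']
  have := hmin (Set.mem_Ici.2 hx)
  simp only [f, klFun_one, Set.mem_ofPred_eq] at this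
  linarith

lemma three_mul_sq_sub_le_mul_klFun_div {p q : ℝ} (hp : 0 ≤ p) (hq : 0 < q) :
    3 * (p - q) ^ 2 ≤ 2 * (p + 2 * q) * (q * klFun (p / q)) := by
  obtain ⟨x, hx, rfl⟩ : ∃ x, 0 ≤ x ∧ p = q * x := ⟨p / q, by positivity, by field_simp⟩
  rw [mul_div_cancel_left₀ x hq.ne']
  have := mul_le_mul_of_nonneg_left (three_mul_sq_sub_one_le_klFun hx) (sq_nonneg q)
  linear_combination this

lemma mul_klFun_div {p q : ℝ} (hpq : q = 0 → p = 0) :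
    q * klFun (p / q) = p * log (p / q) + q - p := by
  rcases eq_or_ne q 0 with hq | hq
  · simp [hq, hpq hq]
  · rw [klFun_apply]
    field_simp

theorem pinsker_fintype {α : Type*} [Fintype α] {P Q : α → ℝ} (hP : ∀ a, 0 ≤ P a)
    (hQ : ∀ a, 0 ≤ Q a) (hPsum : ∑ a, P a = 1) (hQsum : ∑ a, Q a = 1)
    (hPQ : ∀ a, Q a = 0 → P a = 0) :
    (∑ a, |P a - Q a|) ^ 2 ≤ 2 * ∑ a, P a * log (P a / Q a) := by
  have hsq : ∀ a, |P a - Q a| ^ 2 ≤ Q a * klFun (P a / Q a) * (2 * (P a + 2 * Q a) / 3) := by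
    intro a
    rcases (hQ a).eq_or_lt with hQa | hQa
    · simp [← hQa, hPQ a hQa.symm]
    · linarith [sq_abs (P a - Q a), three_mul_sq_sub_le_mul_klFun_div (hP a) hQa]
  have hkl : ∑ a, Q a * klFun (P a / Q a) = ∑ a, P a * log (P a / Q a) := by
    simp only [mul_klFun_div (hPQ _), sum_sub_distrib, sum_add_distrib, hPsum, hQsum]
    ring
  have hweight : ∑ a, 2 * (P a + 2 * Q a) / 3 = 2 := by
    simp only [← sum_div, ← mul_sum, sum_add_distrib, hPsum, hQsum]
    norm_num
  calc (∑ a, |P a - Q a|) ^ 2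
      ≤ (∑ a, Q a * klFun (P a / Q a)) * ∑ a, 2 * (P a + 2 * Q a) / 3 :=
        sum_sq_le_sum_mul_sum_of_sq_le_mul _
          (fun a _ ↦ mul_nonneg (hQ a) (klFun_nonneg (div_nonneg (hP a) (hQ a))))
          (fun a _ ↦ by linarith [hP a, hQ a]) (fun a _ ↦ hsq a)
    _ = 2 * ∑ a, P a * log (P a / Q a) := by rw [hkl, hweight, mul_comm]

theorem sq_sum_mul_abs_sub_le_two_mul_mutualInfo {S T : Type*} [Fintype S] [Fintype T]
    {pS : S → ℝ} (hpS : ∀ s, 0 ≤ pS s) (hpSsum : ∑ s, pS s = 1)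
    {W : S → T → ℝ} (hW : ∀ s t, 0 ≤ W s t) (hWsum : ∀ s, ∑ t, W s t = 1) :
    (∑ s, ∑ t, pS s * |W s t - ∑ s', pS s' * W s' t|) ^ 2 ≤
      2 * ∑ s, ∑ t, pS s * W s t * log (W s t / ∑ s', pS s' * W s' t) := by
  set q : T → ℝ := fun t ↦ ∑ s', pS s' * W s' t
  have hjoint : ∀ s t, 0 ≤ pS s * W s t := fun s t ↦ mul_nonneg (hpS s) (hW s t)
  have hq : ∀ t, 0 ≤ q t := fun t ↦ sum_nonneg fun s _ ↦ hjoint s t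
  have hqsum : ∑ t, q t = 1 := by
    rw [sum_comm]
    simp only [← mul_sum, hWsum, mul_one, hpSsum]
  have hWq : ∀ s t, q t = 0 → pS s * W s t = 0 := fun s t hqt ↦
    le_antisymm (hqt ▸ single_le_sum (fun s' _ ↦ hjoint s' t) (mem_univ s)) (hjoint s t)
  have hpinsker := pinsker_fintype (P := fun x : S × T ↦ pS x.1 * W x.1 x.2)
    (Q := fun x ↦ pS x.1 * q x.2) (fun x ↦ hjoint x.1 x.2)
    (fun x ↦ mul_nonneg (hpS x.1) (hq x.2))
    (by simp only [Fintype.sum_prod_type, ← mul_sum, hWsum, mul_one, hpSsum])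
    (by simp only [Fintype.sum_prod_type, ← mul_sum, hqsum, mul_one, hpSsum])
    (fun x hx ↦ (mul_eq_zero.1 hx).elim (fun h ↦ by simp [h]) (hWq x.1 x.2))
  have habs : ∀ s t, |pS s * W s t - pS s * q t| = pS s * |W s t - q t| := fun s t ↦ by
    rw [← mul_sub, abs_mul, abs_of_nonneg (hpS s)]
  have hlog : ∀ s t, pS s * W s t * log (pS s * W s t / (pS s * q t)) =
      pS s * W s t * log (W s t / q t) := fun s t ↦ by
    rcases (hpS s).eq_or_lt with hs | hs
    · simp [← hs]
    · rw [mul_div_mul_left _ _ hs.ne']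
  simpa only [Fintype.sum_prod_type, habs, hlog] using hpinsker

lemma mul_sub_inf'_le_sum_mul_abs_sub {ι : Type*} [Fintype ι] [Nonempty ι] {w f : ι → ℝ}
    {ρ c : ℝ} (hρ : 0 ≤ ρ) (hw : ∀ i, ρ ≤ w i) :
    ρ * (c - univ.inf' univ_nonempty f) ≤ ∑ i, w i * |f i - c| := by
  obtain ⟨i, -, hi⟩ := exists_mem_eq_inf' univ_nonempty f
  calc ρ * (c - univ.inf' univ_nonempty f)
      ≤ w i * |f i - c| := by
        rw [hi, abs_sub_comm]
        exact (mul_le_mul_of_nonneg_left (le_abs_self _) hρ).trans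
          (mul_le_mul_of_nonneg_right (hw i) (abs_nonneg _))
    _ ≤ ∑ i, w i * |f i - c| :=
        single_le_sum (f := fun j ↦ w j * |f j - c|)
          (fun j _ ↦ mul_nonneg (hρ.trans (hw j)) (abs_nonneg _)) (mem_univ i)

/-- Contrapositive: if the mutual information `I(S; S̃)` (in nats) is at most
`ρ²/(2e²)` with `ρ = min_s p_S(s) > 0`, then `∑_t min_s W(t|s) ≥ 1 - e⁻¹`. -/
theorem min_sum_ge_of_mutualInfo_le {S T : Type*} [Fintype S] [Fintype T]
    [Nonempty S]
    (pS : S → ℝ) (hpSnn : ∀ s, 0 < pS s) (hpSsum : ∑ s, pS s = 1)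
    (W : S → T → ℝ) (hWnn : ∀ s t, 0 ≤ W s t) (hWsum : ∀ s, ∑ t, W s t = 1)
    (hI : ∑ s, ∑ t, pS s * W s t *
        Real.log (W s t / (∑ s', pS s' * W s' t))
        ≤ ((Finset.univ.inf' Finset.univ_nonempty pS) ^ 2) / (2 * Real.exp 1 ^ 2)) :
    1 - (Real.exp 1)⁻¹ ≤
      ∑ t, Finset.univ.inf' Finset.univ_nonempty (fun s => W s t) := by
  set ρ := univ.inf' univ_nonempty pS
  have hρ : 0 < ρ := (lt_inf'_iff _).2 fun s _ ↦ hpSnn s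
  set A := ∑ s, ∑ t, pS s * |W s t - ∑ s', pS s' * W s' t|
  have hA : A ≤ ρ / exp 1 := by
    refine le_of_sq_le_sq ?_ (by positivity)
    calc A ^ 2 ≤ 2 * ∑ s, ∑ t, pS s * W s t * log (W s t / ∑ s', pS s' * W s' t) :=
          sq_sum_mul_abs_sub_le_two_mul_mutualInfo (fun s ↦ (hpSnn s).le) hpSsum hWnn hWsum
      _ ≤ 2 * (ρ ^ 2 / (2 * exp 1 ^ 2)) := by gcongr
      _ = (ρ / exp 1) ^ 2 := by field_simp
  have hmin : ρ * (1 - ∑ t, univ.inf' univ_nonempty (fun s ↦ W s t)) ≤ A := by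
    calc ρ * (1 - ∑ t, univ.inf' univ_nonempty (fun s ↦ W s t))
        = ∑ t, ρ * (∑ s', pS s' * W s' t - univ.inf' univ_nonempty (fun s ↦ W s t)) := by
          rw [← mul_sum, sum_sub_distrib, sum_comm]
          simp only [← mul_sum, hWsum, mul_one, hpSsum]
      _ ≤ ∑ t, ∑ s, pS s * |W s t - ∑ s', pS s' * W s' t| :=
          sum_le_sum fun t _ ↦ mul_sub_inf'_le_sum_mul_abs_sub hρ.le fun s ↦ inf'_le _ (mem_univ s)
      _ = A := sum_comm
  have hgap : 1 - ∑ t, univ.inf' univ_nonempty (fun s ↦ W s t) ≤ (exp 1)⁻¹ :=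
    le_of_mul_le_mul_left (hmin.trans (hA.trans_eq (div_eq_mul_inv _ _))) hρ
  linarith
end

section
/- Let S be a finite random variable and Ŝ' a function of another random variable S̃ attaining the maximum a posteriori estimate of S given S̃. Then for ρ = min_s p_S(s) > 0 and Ŝ the maximum likelihood estimate of S given S̃: Σ_{s≠ŝ} p_{Ŝ|S}(ŝ|s) ≤ H(S|S̃)/(2ρ·log 2), where H is conditional entropy in nats. -/
/-!
For a probability vector `q` with largest entry `q m`, the entropy satisfies
`H(q) ≥ 2 log 2 · (1 - q m)` (Ho–Verdú). If `q m ≤ 1/2` this follows from `H(q) ≥ -log (q m)`;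
otherwise from `H(q) ≥ h(q m)`, the binary entropy, which by concavity lies above its chord
`2 log 2 · min(x, 1 - x)`. Applied to the unnormalised posterior `s ↦ p_S(s) W(t|s)` at each
output `t`, whose largest entry is the MAP estimate, and summed over `t`, this bounds the MAP
error probability by `H(S|S̃)/(2 log 2)`. The ML estimate has the largest likelihood, so its
off-diagonal likelihood mass at `t` is at most that of the MAP estimate, which is at most
`1/ρ` times the MAP error probability at `t`.
-/

open Finset Real

lemma two_mul_log_two_mul_le_binEntropy {x : ℝ} (h0 : 0 ≤ x) (h1 : x ≤ 2⁻¹) :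
    2 * log 2 * x ≤ binEntropy x := by
  have hchord := strictConcave_binEntropy.concaveOn.2 (show (0 : ℝ) ∈ Set.Icc 0 1 by norm_num)
    (show (2⁻¹ : ℝ) ∈ Set.Icc 0 1 by norm_num) (by linarith : 0 ≤ 1 - 2 * x)
    (by linarith : 0 ≤ 2 * x) (by ring)
  simp only [smul_eq_mul, binEntropy_zero, binEntropy_two_inv, mul_zero, zero_add] at hchord
  rw [show 2 * x * 2⁻¹ = x by ring] at hchord
  linarith

lemma two_mul_log_two_mul_one_sub_le_neg_log {x : ℝ} (h0 : 0 < x) (h1 : x ≤ 2⁻¹) :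
    2 * log 2 * (1 - x) ≤ -log x := by
  have hlog : log (2 * x) ≤ 2 * x - 1 := log_le_sub_one_of_pos (by positivity)
  rw [log_mul two_ne_zero h0.ne'] at hlog
  nlinarith [log_two_lt_d9]

lemma sum_mul_log_le_mul_log_of_le {ι : Type*} {t : Finset ι} {q : ι → ℝ} {c : ℝ}
    (hq : ∀ s ∈ t, 0 ≤ q s) (hc : ∀ s ∈ t, q s ≤ c) :
    ∑ s ∈ t, q s * log (q s) ≤ (∑ s ∈ t, q s) * log c := by
  rw [sum_mul]
  refine sum_le_sum fun s hs => ?_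
  rcases (hq s hs).eq_or_lt with h | h
  · simp [← h]
  · exact mul_le_mul_of_nonneg_left (log_le_log h (hc s hs)) h.le

lemma two_mul_log_two_mul_one_sub_le_entropy {ι : Type*} [Fintype ι] {q : ι → ℝ}
    (hq0 : ∀ s, 0 ≤ q s) (hq1 : ∑ s, q s = 1) {m : ι} (hm : ∀ s, q s ≤ q m) :
    2 * log 2 * (1 - q m) ≤ -∑ s, q s * log (q s) := by
  rcases le_or_gt (q m) 2⁻¹ with hhalf | hhalf
  · obtain ⟨s, -, hs⟩ := exists_lt_of_sum_lt (by simp [hq1] : ∑ _s : ι, (0 : ℝ) < ∑ s, q s)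
    have hmax := sum_mul_log_le_mul_log_of_le (t := univ) (fun s _ => hq0 s) (fun s _ => hm s)
    rw [hq1] at hmax
    linarith [two_mul_log_two_mul_one_sub_le_neg_log (hs.trans_le (hm s)) hhalf]
  · classical
    have hrest : ∑ s ∈ univ.erase m, q s = 1 - q m := by
      rw [sum_erase_eq_sub (mem_univ m), hq1]
    have htail := sum_mul_log_le_mul_log_of_le (t := univ.erase m) (fun s _ => hq0 s)
      fun s hs => hrest ▸ single_le_sum (fun s _ => hq0 s) hs
    rw [hrest] at htail
    have hqm1 : q m ≤ 1 := hq1 ▸ single_le_sum (fun s _ => hq0 s) (mem_univ m)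
    calc 2 * log 2 * (1 - q m) ≤ binEntropy (1 - q m) :=
          two_mul_log_two_mul_le_binEntropy (by linarith) (by linarith)
      _ = -(q m * log (q m)) - (1 - q m) * log (1 - q m) := by
          rw [binEntropy_one_sub, binEntropy, log_inv, log_inv]; ring
      _ ≤ -∑ s, q s * log (q s) := by
          rw [← add_sum_erase _ _ (mem_univ m)]; linarith

lemma two_mul_log_two_mul_sum_sub_le_neg_sum_mul_log_div {ι : Type*} [Fintype ι] {f : ι → ℝ}
    (hf0 : ∀ s, 0 ≤ f s) {m : ι} (hm : ∀ s, f s ≤ f m) :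
    2 * log 2 * (∑ s, f s - f m) ≤ -∑ s, f s * log (f s / ∑ s', f s') := by
  obtain hP | hP := (sum_nonneg fun s (_ : s ∈ univ) => hf0 s).eq_or_lt
  · have hzero : ∀ s, f s = 0 := fun s =>
      (sum_eq_zero_iff_of_nonneg fun s _ => hf0 s).1 hP.symm s (mem_univ s)
    simp [hzero]
  · set P := ∑ s, f s
    have hq := two_mul_log_two_mul_one_sub_le_entropy (q := fun s => f s / P)
      (fun s => div_nonneg (hf0 s) hP.le) (by rw [← sum_div, div_self hP.ne'])
      (fun s => div_le_div_of_nonneg_right (hm s) hP.le)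
    calc 2 * log 2 * (P - f m) = P * (2 * log 2 * (1 - f m / P)) := by field_simp
      _ ≤ P * -∑ s, f s / P * log (f s / P) := mul_le_mul_of_nonneg_left hq hP.le
      _ = -∑ s, f s * log (f s / P) := by
        rw [mul_neg, mul_sum]
        congr 1
        refine sum_congr rfl fun s _ => ?_
        field_simp

lemma two_mul_log_two_mul_mul_sum_erase_le {ι : Type*} [Fintype ι] [DecidableEq ι]
    {p w : ι → ℝ} {ρ : ℝ} (hρ0 : 0 ≤ ρ) (hρ : ∀ s, ρ ≤ p s) (hw : ∀ s, 0 ≤ w s)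
    {a b : ι} (ha : ∀ s, p s * w s ≤ p a * w a) (hb : ∀ s, w s ≤ w b) :
    2 * log 2 * (ρ * ∑ s ∈ univ.erase b, w s) ≤
      -∑ s, p s * w s * log (p s * w s / ∑ s', p s' * w s') := by
  have hML : ρ * ∑ s ∈ univ.erase b, w s ≤ ρ * ∑ s ∈ univ.erase a, w s := by
    rw [sum_erase_eq_sub (mem_univ b), sum_erase_eq_sub (mem_univ a)]
    exact mul_le_mul_of_nonneg_left (by linarith [hb a]) hρ0
  have hprior : ρ * ∑ s ∈ univ.erase a, w s ≤ ∑ s ∈ univ.erase a, p s * w s := by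
    rw [mul_sum]
    exact sum_le_sum fun s _ => mul_le_mul_of_nonneg_right (hρ s) (hw s)
  have hMAP := two_mul_log_two_mul_sum_sub_le_neg_sum_mul_log_div
    (fun s => mul_nonneg (hρ0.trans (hρ s)) (hw s)) ha
  rw [← sum_erase_eq_sub (mem_univ a)] at hMAP
  exact (mul_le_mul_of_nonneg_left (hML.trans hprior) (by positivity)).trans hMAP

theorem ml_offdiag_le_condEntropy_general {S T : Type*} [Fintype S] [Fintype T]
    [Nonempty S] [DecidableEq S]
    (pS : S → ℝ) (hpSpos : ∀ s, 0 < pS s)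
    (W : S → T → ℝ) (hWnn : ∀ s t, 0 ≤ W s t)
    (MAP ML : T → S)
    (hMAP : ∀ t s, pS s * W s t ≤ pS (MAP t) * W (MAP t) t)
    (hML : ∀ t s, W s t ≤ W (ML t) t) :
    ∑ s, ∑ t, (if ML t ≠ s then W s t else 0) ≤
      (-∑ s, ∑ t, pS s * W s t *
          Real.log (pS s * W s t / (∑ s', pS s' * W s' t))) /
        (2 * (Finset.univ.inf' Finset.univ_nonempty pS) * Real.log 2) := by
  set ρ := univ.inf' univ_nonempty pS
  have hρ0 : 0 < ρ := (lt_inf'_iff _).2 fun s _ => hpSpos s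
  have hρ : ∀ s, ρ ≤ pS s := fun s => inf'_le _ (mem_univ s)
  rw [le_div_iff₀ (by positivity), sum_comm, sum_comm (γ := S), ← sum_neg_distrib, sum_mul]
  refine sum_le_sum fun t _ => ?_
  have hoffdiag : ∑ s, (if ML t ≠ s then W s t else 0) = ∑ s ∈ univ.erase (ML t), W s t := by
    rw [← sum_filter, filter_ne]
  rw [hoffdiag]
  linarith [two_mul_log_two_mul_mul_sum_erase_le hρ0.le hρ (fun s => hWnn s t) (hMAP t) (hML t)]

/-- The total off-diagonal mass of the maximum likelihood estimate channel
`p_{Ŝ|S}` is at most `H(S|S̃)/(2ρ log 2)`, via the Ho–Verdú bound for the MAP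
estimator. Here `ML` is the maximum likelihood estimator of `S` from `S̃` and
`MAP` a maximum a posteriori estimator. -/
theorem ml_offdiag_le_condEntropy {S T : Type*} [Fintype S] [Fintype T]
    [Nonempty S] [DecidableEq S]
    (pS : S → ℝ) (hpSpos : ∀ s, 0 < pS s) (hpSsum : ∑ s, pS s = 1)
    (W : S → T → ℝ) (hWnn : ∀ s t, 0 ≤ W s t) (hWsum : ∀ s, ∑ t, W s t = 1)
    (MAP ML : T → S)
    (hMAP : ∀ t s, pS s * W s t ≤ pS (MAP t) * W (MAP t) t)
    (hML : ∀ t s, W s t ≤ W (ML t) t) :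
    ∑ s, ∑ t, (if ML t ≠ s then W s t else 0) ≤
      (-∑ s, ∑ t, pS s * W s t *
          Real.log (pS s * W s t / (∑ s', pS s' * W s' t))) /
        (2 * (Finset.univ.inf' Finset.univ_nonempty pS) * Real.log 2) :=
  ml_offdiag_le_condEntropy_general pS hpSpos W hWnn MAP ML hMAP hML
end

section
/- Let R be an n×n substochastic-type matrix with nonnegative entries, rows summing to 1, and suppose the total off-diagonal mass ℏ := Σ_{s≠ŝ} R(s,ŝ) satisfies ℏ ≤ 1. Then max over s ≠ ŝ with Σ_{s'} R(s',ŝ) > 0 of R(s,ŝ)/Σ_{s'} R(s',ŝ) ≤ ℏ/(ℏ+1). -/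
/-- If the total off-diagonal mass `ℏ` of a row-stochastic matrix `R` is at most 1,
then every off-diagonal entry normalized by its (positive) column sum is at most
`ℏ/(ℏ+1)`. -/
theorem offdiag_ratio_le (n : ℕ) (R : Matrix (Fin n) (Fin n) ℝ)
    (hRnn : ∀ s t, 0 ≤ R s t) (hRsum : ∀ s, ∑ t, R s t = 1)
    (hh : (∑ s, ∑ t, if s ≠ t then R s t else 0) ≤ 1) :
    ∀ s t : Fin n, s ≠ t → 0 < ∑ s', R s' t →
      R s t / ∑ s', R s' t ≤
        (∑ s, ∑ t, if s ≠ t then R s t else 0) /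
          ((∑ s, ∑ t, if s ≠ t then R s t else 0) + 1) := by
  intro s t hst hpos
  set f : Fin n → ℝ := fun s' => ∑ t', if s' ≠ t' then R s' t' else 0 with hf
  have hfnn : ∀ s', 0 ≤ f s' := fun s' =>
    Finset.sum_nonneg fun t' _ => by by_cases h : s' = t' <;> simp [h, hRnn]
  set H : ℝ := ∑ s, ∑ t, if s ≠ t then R s t else 0 with hH
  have hHnn : 0 ≤ H := Finset.sum_nonneg fun s' _ => hfnn s'
  -- f s ≥ R s t
  have hfs : R s t ≤ f s := by
    have := Finset.single_le_sum (f := fun t' => if s ≠ t' then R s t' else 0)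
      (fun t' _ => by by_cases h : s = t' <;> simp [h, hRnn]) (Finset.mem_univ t)
    rw [hf]; simpa [hst] using this
  -- f s + f t ≤ H
  have hpair : f s + f t ≤ H := by
    have hsub : ({s, t} : Finset (Fin n)) ⊆ Finset.univ := Finset.subset_univ _
    calc f s + f t = ∑ x ∈ ({s, t} : Finset (Fin n)), f x := (Finset.sum_pair (f := f) hst).symm
      _ ≤ H := Finset.sum_le_sum_of_subset_of_nonneg hsub fun x _ _ => hfnn x
  -- diagonal entry
  have hdiag : f t = 1 - R t t := by
    have key : ∀ t', (if t ≠ t' then R t t' else 0)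
        = R t t' - (if t = t' then R t t' else 0) := by
      intro t'; by_cases h : t = t' <;> simp [h]
    rw [hf]
    simp_rw [key, Finset.sum_sub_distrib, hRsum t, Finset.sum_ite_eq, Finset.mem_univ,
      if_true]
  -- column sum bound
  have hcol : R s t + R t t ≤ ∑ s', R s' t := by
    have hsub : ({s, t} : Finset (Fin n)) ⊆ Finset.univ := Finset.subset_univ _
    calc R s t + R t t = ∑ x ∈ ({s, t} : Finset (Fin n)), R x t := (Finset.sum_pair (f := fun x => R x t) hst).symm
      _ ≤ ∑ s', R s' t := Finset.sum_le_sum_of_subset_of_nonneg hsub fun x _ _ => hRnn x t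
  rw [div_le_div_iff₀ hpos (by linarith)]
  nlinarith [hRnn s t, hfnn t, mul_le_mul_of_nonneg_left hcol hHnn]
end

section
/- Let P be an n×m stochastic matrix and τ = min over columns x with positive column sum of (min_s P(s,x))/(max_s P(s,x)). If D is an n×n matrix with row sums 0 and ‖D‖_∞ ≤ τ (maximum absolute row sum norm), then all entries of (I + D)·P are nonnegative and its rows sum to 1. -/
/-- If `D` has zero row sums and maximum absolute row sum at most `τ`, where `τ` is
bounded above by `min_s P(s,x) / max_s P(s,x)` for every column `x` of the
stochastic matrix `P` with positive column sum, then `(I + D) * P` has nonnegative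
entries and rows summing to 1. -/
theorem perturbed_stochastic (n m : ℕ) (hn : 0 < n)
    (P : Matrix (Fin n) (Fin m) ℝ)
    (hPnn : ∀ s x, 0 ≤ P s x) (hPsum : ∀ s, ∑ x, P s x = 1)
    (τ : ℝ)
    (hτ : ∀ x : Fin m, 0 < ∑ s, P s x →
      τ ≤ (Finset.univ.inf' (Finset.univ_nonempty_iff.mpr (Fin.pos_iff_nonempty.mp hn))
              (fun s => P s x)) /
          (Finset.univ.sup' (Finset.univ_nonempty_iff.mpr (Fin.pos_iff_nonempty.mp hn))
              (fun s => P s x)))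
    (D : Matrix (Fin n) (Fin n) ℝ)
    (hDrow : ∀ s, ∑ t, D s t = 0)
    (hDnorm : ∀ s, ∑ t, |D s t| ≤ τ) :
    (∀ s x, 0 ≤ (((1 + D) * P : Matrix (Fin n) (Fin m) ℝ)) s x) ∧ (∀ s, ∑ x, (((1 + D) * P : Matrix (Fin n) (Fin m) ℝ)) s x = 1) := by
  have hne : (Finset.univ : Finset (Fin n)).Nonempty :=
    Finset.univ_nonempty_iff.mpr (Fin.pos_iff_nonempty.mp hn)
  have hentry : ∀ s x, (((1 + D) * P : Matrix (Fin n) (Fin m) ℝ)) s x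
      = P s x + ∑ t, D s t * P t x := by
    intro s x
    simp only [Matrix.mul_apply, Matrix.add_apply, Matrix.one_apply, add_mul,
      Finset.sum_add_distrib, Finset.sum_ite_eq, Finset.mem_univ, if_pos, ite_mul,
      one_mul, zero_mul]
  constructor
  · intro s x
    rw [hentry]
    by_cases hcol : 0 < ∑ t, P t x
    · -- column sum positive
      set inf := Finset.univ.inf' hne (fun s => P s x) with hinf
      set sup := Finset.univ.sup' hne (fun s => P s x) with hsup
      have hsup_pos : 0 < sup := by
        have h0 : ∑ t : Fin n, (0:ℝ) < ∑ t, P t x := by simpa using hcol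
        rcases Finset.exists_lt_of_sum_lt h0 with ⟨t, -, ht⟩
        exact lt_of_lt_of_le ht (Finset.le_sup' (fun s => P s x) (Finset.mem_univ t))
      have hτx := hτ x hcol
      have hbound : |∑ t, D s t * P t x| ≤ τ * sup := by
        calc |∑ t, D s t * P t x| ≤ ∑ t, |D s t * P t x| := Finset.abs_sum_le_sum_abs _ _
          _ ≤ ∑ t, |D s t| * sup := by
              refine Finset.sum_le_sum fun t _ => ?_
              rw [abs_mul, abs_of_nonneg (hPnn t x)]
              exact mul_le_mul_of_nonneg_left
                (Finset.le_sup' (fun s => P s x) (Finset.mem_univ t)) (abs_nonneg _)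
          _ = (∑ t, |D s t|) * sup := by rw [Finset.sum_mul]
          _ ≤ τ * sup := mul_le_mul_of_nonneg_right (hDnorm s) hsup_pos.le
      have hτsup : τ * sup ≤ inf := by
        have := mul_le_mul_of_nonneg_right hτx hsup_pos.le
        rwa [div_mul_cancel₀ _ hsup_pos.ne'] at this
      have hinf_le : inf ≤ P s x := Finset.inf'_le (fun s => P s x) (Finset.mem_univ s)
      nlinarith [neg_abs_le (∑ t, D s t * P t x)]
    · -- column sum zero: all entries zero
      have hall : ∀ t, P t x = 0 := by
        have hz : ∑ t, P t x = 0 :=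
          le_antisymm (not_lt.mp hcol) (Finset.sum_nonneg fun t _ => hPnn t x)
        intro t
        exact (Finset.sum_eq_zero_iff_of_nonneg (fun t _ => hPnn t x)).mp hz t (Finset.mem_univ t)
      simp [hall]
  · intro s
    have : ∑ x, (((1 + D) * P : Matrix (Fin n) (Fin m) ℝ)) s x
        = ∑ x, P s x + ∑ t, D s t * ∑ x, P t x := by
      simp only [hentry, Finset.sum_add_distrib, Finset.mul_sum]
      rw [Finset.sum_comm]
    rw [this]
    simp [hPsum, hDrow s]
end
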